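/- arXiv:2407.09418 — 5 statements merged into one kernel-verified Lean document; each statement's English description precedes it below -/
import Mathlib

section
/- Let r ≥ 1 be a natural number and let Δt ≥ 0, W > 0, D ≥ 0, M ≥ 0, Ξ ≥ 0 and ξ be real numbers with 0 ≤ ξ ≤ Ξ and ξ·(W + Δt·D) ≤ M. Then the rescaling factor ζ := 1 − (1 − ξ)^r satisfies W·|ζ| ≤ r·M·(1 + Ξ)^{r−1}. -/
/-!
Factor `ζ = 1 - (1 - ξ)^r = ξ · ∑_{i<r} (1 - ξ)^i`. Since `|1 - ξ| ≤ 1 + Ξ`, the geometric sum is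
at most `r (1 + Ξ)^(r-1)` in absolute value, and `W ξ ≤ ξ (W + Δt D) ≤ M` absorbs the factor `ξ`.
-/

open Finset

theorem one_sub_one_sub_pow_eq_mul_geom_sum {R : Type*} [CommRing R] (x : R) (n : ℕ) :
    1 - (1 - x) ^ n = x * ∑ i ∈ range n, (1 - x) ^ i := by
  simpa only [sub_sub_cancel] using (mul_neg_geom_sum (1 - x) n).symm

theorem abs_geom_sum_le {R : Type*} [Ring R] [LinearOrder R] [IsStrictOrderedRing R]
    {x c : R} (hx : |x| ≤ c) (hc : 1 ≤ c) (n : ℕ) :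
    |∑ i ∈ range n, x ^ i| ≤ n * c ^ (n - 1) := by
  calc |∑ i ∈ range n, x ^ i|
      ≤ ∑ i ∈ range n, |x| ^ i := by
        simpa only [abs_pow] using abs_sum_le_sum_abs (fun i => x ^ i) (range n)
    _ ≤ ∑ _i ∈ range n, c ^ (n - 1) := by
        refine sum_le_sum fun i hi => ?_
        calc |x| ^ i ≤ c ^ i := pow_le_pow_left₀ (abs_nonneg x) hx i
          _ ≤ c ^ (n - 1) := pow_le_pow_right₀ hc (by have := mem_range.mp hi; omega)
    _ = n * c ^ (n - 1) := by rw [sum_const, card_range, nsmul_eq_mul]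

theorem sav_zeta_bound_general (r : ℕ)
    (Δt W D M Ξ ξ : ℝ)
    (hΔt : 0 ≤ Δt) (hD : 0 ≤ D) (hM : 0 ≤ M)
    (hξ0 : 0 ≤ ξ) (hξΞ : ξ ≤ Ξ) (hξM : ξ * (W + Δt * D) ≤ M) :
    W * |1 - (1 - ξ) ^ r| ≤ r * M * (1 + Ξ) ^ (r - 1) := by
  have hWξ : W * ξ ≤ M := by nlinarith [mul_nonneg hξ0 (mul_nonneg hΔt hD)]
  have h1ξ : |1 - ξ| ≤ 1 + Ξ := abs_le.mpr ⟨by linarith, by linarith⟩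
  have hsum := abs_geom_sum_le h1ξ (by linarith) r
  calc W * |1 - (1 - ξ) ^ r|
      = W * ξ * |∑ i ∈ range r, (1 - ξ) ^ i| := by
        rw [one_sub_one_sub_pow_eq_mul_geom_sum, abs_mul, abs_of_nonneg hξ0, mul_assoc]
    _ ≤ M * (r * (1 + Ξ) ^ (r - 1)) := mul_le_mul hWξ hsum (abs_nonneg _) hM
    _ = r * M * (1 + Ξ) ^ (r - 1) := by ring

/-- Quantitative boundedness of the rescaling factor: if `0 ≤ ξ ≤ Ξ` and
`ξ·(W + Δt·D) ≤ M`, then `ζ := 1 − (1 − ξ)^r` satisfies `W·|ζ| ≤ r·M·(1 + Ξ)^(r−1)`. -/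
theorem sav_zeta_bound (r : ℕ) (hr : 1 ≤ r)
    (Δt W D M Ξ ξ : ℝ)
    (hΔt : 0 ≤ Δt) (hW : 0 < W) (hD : 0 ≤ D) (hM : 0 ≤ M) (hΞ : 0 ≤ Ξ)
    (hξ0 : 0 ≤ ξ) (hξΞ : ξ ≤ Ξ) (hξM : ξ * (W + Δt * D) ≤ M) :
    W * |1 - (1 - ξ) ^ r| ≤ r * M * (1 + Ξ) ^ (r - 1) :=
  sav_zeta_bound_general r Δt W D M Ξ ξ hΔt hD hM hξ0 hξΞ hξM
end

section
/- Let r ≥ 1 be a natural number, Δt > 0, Ξ ≥ 0, and let W : ℕ → ℝ, D : ℕ → ℝ, R : ℕ → ℝ be sequences with W_m > 0, D_m ≥ 0 for all m, R₀ ≥ 0, and R_{m+1} = R_m · W_{m+1}/(W_{m+1} + Δt·D_{m+1}) for all m. Set ξ_{m+1} := R_{m+1}/W_{m+1} and ζ_{m+1} := 1 − (1 − ξ_{m+1})^r, and assume ξ_{m+1} ≤ Ξ for all m. Then for every m ≥ 0 the rescaled energy satisfies |ζ_{m+1}|·W_{m+1} ≤ r·R₀·(1 + Ξ)^{r−1}.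 -/
/-! The SAV recursion multiplies `R` by the factor `W/(W + Δt·D) ∈ [0, 1]`, so `0 ≤ R_{m+1} ≤ R₀`.
Since `1 - (1 - ξ)^r = 1^r - (1 - ξ)^r`, the mean value bound for `x ↦ x^r` on `[-(1 + Ξ), 1 + Ξ]`
gives `|ζ_{m+1}| ≤ r (1 + Ξ)^{r-1} ξ_{m+1}`, and `ξ_{m+1} W_{m+1} = R_{m+1} ≤ R₀`. -/

section SuccEqMul

variable {α : Type*} [Semiring α] [PartialOrder α] [IsOrderedRing α] {R c : ℕ → α}

lemma nonneg_of_succ_eq_mul (h0 : 0 ≤ R 0) (hc : ∀ m, 0 ≤ c m)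
    (hrec : ∀ m, R (m + 1) = R m * c m) (m : ℕ) : 0 ≤ R m := by
  induction m with
  | zero => exact h0
  | succ n ih => rw [hrec n]; exact mul_nonneg ih (hc n)

lemma antitone_of_succ_eq_mul (hR : ∀ m, 0 ≤ R m) (hc : ∀ m, c m ≤ 1)
    (hrec : ∀ m, R (m + 1) = R m * c m) : Antitone R :=
  antitone_nat_of_succ_le fun m => (hrec m).trans_le (mul_le_of_le_one_right (hR m) (hc m))

end SuccEqMul

lemma abs_one_sub_one_sub_pow_le {ξ Ξ : ℝ} (r : ℕ) (hξ₀ : 0 ≤ ξ) (hξ : ξ ≤ Ξ) :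
    |1 - (1 - ξ) ^ r| ≤ r * (1 + Ξ) ^ (r - 1) * ξ := by
  have hmax : max |1| |1 - ξ| ≤ 1 + Ξ :=
    max_le (by rw [abs_one]; linarith) (abs_le.2 ⟨by linarith, by linarith⟩)
  calc |1 - (1 - ξ) ^ r| = |1 ^ r - (1 - ξ) ^ r| := by rw [one_pow]
    _ ≤ |1 - (1 - ξ)| * r * max |1| |1 - ξ| ^ (r - 1) := abs_pow_sub_pow_le ..
    _ ≤ ξ * r * (1 + Ξ) ^ (r - 1) := by
        rw [sub_sub_cancel, abs_of_nonneg hξ₀]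
        gcongr
    _ = r * (1 + Ξ) ^ (r - 1) * ξ := by ring

theorem sav_original_energy_bound_general (r : ℕ)
    (Δt : ℝ) (hΔt : 0 < Δt) (Ξ : ℝ)
    (W D R : ℕ → ℝ)
    (hW : ∀ m, 0 < W m) (hD : ∀ m, 0 ≤ D m) (hR0 : 0 ≤ R 0)
    (hrec : ∀ m, R (m + 1) = R m * (W (m + 1) / (W (m + 1) + Δt * D (m + 1))))
    (hξΞ : ∀ m, R (m + 1) / W (m + 1) ≤ Ξ) :
    ∀ m, |1 - (1 - R (m + 1) / W (m + 1)) ^ r| * W (m + 1) ≤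
      r * R 0 * (1 + Ξ) ^ (r - 1) := by
  have hΔtD : ∀ m, 0 ≤ Δt * D m := fun m => mul_nonneg hΔt.le (hD m)
  have hfactor_nonneg : ∀ m, 0 ≤ W (m + 1) / (W (m + 1) + Δt * D (m + 1)) := fun m =>
    div_nonneg (hW _).le (add_nonneg (hW _).le (hΔtD _))
  have hfactor_le_one : ∀ m, W (m + 1) / (W (m + 1) + Δt * D (m + 1)) ≤ 1 := fun m =>
    div_le_one_of_le₀ (le_add_of_nonneg_right (hΔtD _)) (add_nonneg (hW _).le (hΔtD _))
  have hR := nonneg_of_succ_eq_mul hR0 hfactor_nonneg hrec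
  have hR_anti := antitone_of_succ_eq_mul hR hfactor_le_one hrec
  intro m
  have hξW : R (m + 1) / W (m + 1) * W (m + 1) = R (m + 1) := div_mul_cancel₀ _ (hW _).ne'
  calc |1 - (1 - R (m + 1) / W (m + 1)) ^ r| * W (m + 1)
      ≤ r * (1 + Ξ) ^ (r - 1) * (R (m + 1) / W (m + 1)) * W (m + 1) := 
        mul_le_mul_of_nonneg_right
          (abs_one_sub_one_sub_pow_le r (div_nonneg (hR _) (hW _).le) (hξΞ m)) (hW _).le
    _ = r * (1 + Ξ) ^ (r - 1) * R (m + 1) := by rw [mul_assoc, hξW]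
    _ ≤ r * (1 + Ξ) ^ (r - 1) * R 0 := by
        have hΞ : 0 ≤ Ξ := (div_nonneg (hR _) (hW _).le).trans (hξΞ m)
        gcongr
        exact hR_anti (Nat.zero_le _)
    _ = r * R 0 * (1 + Ξ) ^ (r - 1) := by ring

/-- Uniform boundedness of the original discrete energy in the SAV schemes:
under the SAV recursion, with `ξ_{m+1} := R_{m+1}/W_{m+1}` and
`ζ_{m+1} := 1 − (1 − ξ_{m+1})^r`, if `ξ_{m+1} ≤ Ξ` for all `m`, then
`|ζ_{m+1}|·W_{m+1} ≤ r·R₀·(1 + Ξ)^(r−1)` for all `m`. -/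
theorem sav_original_energy_bound (r : ℕ) (hr : 1 ≤ r)
    (Δt : ℝ) (hΔt : 0 < Δt) (Ξ : ℝ) (hΞ : 0 ≤ Ξ)
    (W D R : ℕ → ℝ)
    (hW : ∀ m, 0 < W m) (hD : ∀ m, 0 ≤ D m) (hR0 : 0 ≤ R 0)
    (hrec : ∀ m, R (m + 1) = R m * (W (m + 1) / (W (m + 1) + Δt * D (m + 1))))
    (hξΞ : ∀ m, R (m + 1) / W (m + 1) ≤ Ξ) :
    ∀ m, |1 - (1 - R (m + 1) / W (m + 1)) ^ r| * W (m + 1) ≤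
      r * R 0 * (1 + Ξ) ^ (r - 1) :=
  sav_original_energy_bound_general r Δt hΔt Ξ W D R hW hD hR0 hrec hξΞ
end

section
/- Let N ≥ 1 and let P, Q : ZMod N → ℝ² be two closed polygons with shoelace area A(P) := (1/2)·Σ_{j ∈ ZMod N} det(P_j, P_{j+1}), where det(u,v) := u₁v₂ − u₂v₁. Then A(Q) − A(P) = (1/2)·Σ_{j ∈ ZMod N} det( Q_j − P_j , (P_{j+1} + Q_{j+1})/2 − (P_{j−1} + Q_{j−1})/2 ). -/
/-!
Write `D = Q - P` and `S = P + Q`. By bilinearity, each edge term changes by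
`det(Q_j, Q_{j+1}) - det(P_j, P_{j+1}) = ½ det(D_j, S_{j+1}) - ½ det(D_{j+1}, S_j)`,
and shifting the index of the second sum by one turns it into `½ det(D_j, S_{j-1})`.
-/

/-- The planar cross product (2×2 determinant) of two vectors. -/
def det2 (u v : ℝ × ℝ) : ℝ := u.1 * v.2 - u.2 * v.1

/-- The shoelace area of a closed polygon `P : ZMod N → ℝ²`. -/
noncomputable def shoelaceArea (N : ℕ) [NeZero N] (P : ZMod N → ℝ × ℝ) : ℝ :=
  (1 / 2) * ∑ j : ZMod N, det2 (P j) (P (j + 1))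

theorem det2_sub_right (u v w : ℝ × ℝ) : det2 u (v - w) = det2 u v - det2 u w := by
  simp only [det2, Prod.fst_sub, Prod.snd_sub]
  ring

theorem det2_sub_det2 (p p' q q' : ℝ × ℝ) :
    det2 q q' - det2 p p' =
      det2 (q - p) ((2 : ℝ)⁻¹ • (p' + q')) - det2 (q' - p') ((2 : ℝ)⁻¹ • (p + q)) := by
  simp only [det2, Prod.fst_sub, Prod.snd_sub, Prod.fst_add, Prod.snd_add, Prod.smul_fst,
    Prod.smul_snd, smul_eq_mul]
  ring

theorem sum_det2_shift_sub_sum_det2_shift {G : Type*} [AddGroup G] [Fintype G] (a : G)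
    (P Q : G → ℝ × ℝ) :
    ∑ j, det2 (Q j) (Q (j + a)) - ∑ j, det2 (P j) (P (j + a)) =
      ∑ j, det2 (Q j - P j)
        ((2 : ℝ)⁻¹ • (P (j + a) + Q (j + a)) - (2 : ℝ)⁻¹ • (P (j - a) + Q (j - a))) := by
  have hshift : ∑ j, det2 (Q (j + a) - P (j + a)) ((2 : ℝ)⁻¹ • (P j + Q j)) =
      ∑ j, det2 (Q j - P j) ((2 : ℝ)⁻¹ • (P (j - a) + Q (j - a))) := by
    rw [← (Equiv.subRight a).sum_comp]
    simp only [Equiv.subRight_apply, sub_add_cancel]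
  simp only [← Finset.sum_sub_distrib, det2_sub_det2 (P _), det2_sub_right]
  rw [Finset.sum_sub_distrib, Finset.sum_sub_distrib, hshift]

theorem shoelace_area_variation_general (N : ℕ) [NeZero N]
    (P Q : ZMod N → ℝ × ℝ) :
    shoelaceArea N Q - shoelaceArea N P =
      (1 / 2) * ∑ j : ZMod N,
        det2 (Q j - P j)
          ((2 : ℝ)⁻¹ • (P (j + 1) + Q (j + 1)) - (2 : ℝ)⁻¹ • (P (j - 1) + Q (j - 1))) := by
  rw [shoelaceArea, shoelaceArea, ← mul_sub, sum_det2_shift_sub_sum_det2_shift]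

/-- Discrete area-variation identity: for two closed polygons `P, Q : ZMod N → ℝ²`,
`A(Q) − A(P) = (1/2)·Σ_j det(Q_j − P_j, (P_{j+1}+Q_{j+1})/2 − (P_{j−1}+Q_{j−1})/2)`. -/
theorem shoelace_area_variation (N : ℕ) [NeZero N] (hN : 1 ≤ N)
    (P Q : ZMod N → ℝ × ℝ) :
    shoelaceArea N Q - shoelaceArea N P =
      (1 / 2) * ∑ j : ZMod N,
        det2 (Q j - P j)
          ((2 : ℝ)⁻¹ • (P (j + 1) + Q (j + 1)) - (2 : ℝ)⁻¹ • (P (j - 1) + Q (j - 1))) :=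
  shoelace_area_variation_general N P Q
end

section
/- Let N ≥ 1 and let P : ZMod N → ℝ² be a closed polygon with shoelace area A(P) := (1/2)·Σ_{j ∈ ZMod N} det(P_j, P_{j+1}), where det(u,v) := u₁v₂ − u₂v₁. Let r ≥ 1 be a natural number, and let ξ, C, Δt be real numbers with C ≥ 0, Δt ≥ 0, |1 − ξ| ≤ C·Δt and C·Δt ≤ 1. Set ζ := 1 − (1 − ξ)^r. Then A(ζ·P) = ζ²·A(P) and |A(ζ·P) − A(P)| ≤ 3·(C·Δt)^r·|A(P)|. -/
lemma det2_smul_smul (a b : ℝ) (u v : ℝ × ℝ) : det2 (a • u) (b • v) = a * b * det2 u v := by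
  simp only [det2, Prod.smul_fst, Prod.smul_snd, smul_eq_mul]
  ring

lemma shoelaceArea_smul (N : ℕ) [NeZero N] (P : ZMod N → ℝ × ℝ) (c : ℝ) :
    shoelaceArea N (fun j => c • P j) = c ^ 2 * shoelaceArea N P := by
  simp only [shoelaceArea, det2_smul_smul, ← sq, ← Finset.mul_sum]
  ring

lemma abs_sq_sub_one_le {ζ δ : ℝ} (hζ : |ζ - 1| ≤ δ) (hδ : δ ≤ 1) : |ζ ^ 2 - 1| ≤ 3 * δ := by
  have hplus : |ζ + 1| ≤ 3 :=
    calc |ζ + 1| = |(ζ - 1) + 2| := by ring_nf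
      _ ≤ |ζ - 1| + 2 := by simpa using abs_add_le (ζ - 1) 2
      _ ≤ 3 := by linarith
  calc |ζ ^ 2 - 1| = |ζ - 1| * |ζ + 1| := by rw [← abs_mul]; ring_nf
    _ ≤ δ * 3 := mul_le_mul hζ hplus (abs_nonneg _) ((abs_nonneg _).trans hζ)
    _ = 3 * δ := mul_comm _ _

theorem shoelace_rescaling_area_defect_general (N : ℕ) [NeZero N]
    (P : ZMod N → ℝ × ℝ) (r : ℕ)
    (ξ C Δt : ℝ)
    (hξ : |1 - ξ| ≤ C * Δt) (hsmall : C * Δt ≤ 1) :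
    shoelaceArea N (fun j => (1 - (1 - ξ) ^ r) • P j) =
        (1 - (1 - ξ) ^ r) ^ 2 * shoelaceArea N P ∧
    |shoelaceArea N (fun j => (1 - (1 - ξ) ^ r) • P j) - shoelaceArea N P| ≤
        3 * (C * Δt) ^ r * |shoelaceArea N P| := by
  set ζ : ℝ := 1 - (1 - ξ) ^ r with hζ
  have hscale := shoelaceArea_smul N P ζ
  refine ⟨hscale, ?_⟩
  have hζ_sub_one : |ζ - 1| ≤ (C * Δt) ^ r := by
    rw [hζ, sub_sub_cancel_left, abs_neg, abs_pow]
    exact pow_le_pow_left₀ (abs_nonneg _) hξ r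
  have hpow_le_one : (C * Δt) ^ r ≤ 1 := pow_le_one₀ ((abs_nonneg _).trans hξ) hsmall
  calc |shoelaceArea N (fun j => ζ • P j) - shoelaceArea N P|
      = |ζ ^ 2 - 1| * |shoelaceArea N P| := by rw [hscale, ← abs_mul]; ring_nf
    _ ≤ 3 * (C * Δt) ^ r * |shoelaceArea N P| :=
        mul_le_mul_of_nonneg_right (abs_sq_sub_one_le hζ_sub_one hpow_le_one) (abs_nonneg _)

/-- Approximate area conservation of the rescaling step: with `ζ := 1 − (1 − ξ)^r`,
`|1 − ξ| ≤ C·Δt` and `C·Δt ≤ 1`, the rescaled polygon `ζ·P` satisfies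
`A(ζ·P) = ζ²·A(P)` and `|A(ζ·P) − A(P)| ≤ 3·(C·Δt)^r·|A(P)|`. -/
theorem shoelace_rescaling_area_defect (N : ℕ) [NeZero N] (hN : 1 ≤ N)
    (P : ZMod N → ℝ × ℝ) (r : ℕ) (hr : 1 ≤ r)
    (ξ C Δt : ℝ) (hC : 0 ≤ C) (hΔt : 0 ≤ Δt)
    (hξ : |1 - ξ| ≤ C * Δt) (hsmall : C * Δt ≤ 1) :
    shoelaceArea N (fun j => (1 - (1 - ξ) ^ r) • P j) =
        (1 - (1 - ξ) ^ r) ^ 2 * shoelaceArea N P ∧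
    |shoelaceArea N (fun j => (1 - (1 - ξ) ^ r) • P j) - shoelaceArea N P| ≤
        3 * (C * Δt) ^ r * |shoelaceArea N P| :=
  shoelace_rescaling_area_defect_general N P r ξ C Δt hξ hsmall
end

section
/- Let γ : ℝ → ℝ be twice continuously differentiable, let 𝒮 : ℝ → ℝ be differentiable, let θ : ℝ → ℝ be differentiable, and let X : ℝ → ℝ² be twice differentiable with X′(s) = (cos θ(s), sin θ(s)) for all s (unit-speed parametrization with inclination angle θ). Define n(s) := (−sin θ(s), cos θ(s)), κ(s) := −X″(s)·n(s), and let B(s) be the 2×2 matrix G(s)·M(2θ(s)) + (𝒮(θ(s))/2)·(I − M(2θ(s))), where G(s) has rows (γ(θ(s)), −γ′(θ(s))) and (γ′(θ(s)), γ(θ(s))) and M(2θ) has rows (cos 2θ, sin 2θ) and (sin 2θ, −cos 2θ). Then for every s, (γ(θ(s)) + γ″(θ(s)))·κ(s)·n(s) = −(d/ds)[ B(s)·X′(s) ]. -/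
/-!
With `𝐭 φ = (cos φ, sin φ)` and `𝐧 φ = (-sin φ, cos φ)`, the matrix `𝐌 φ = M(2φ)` is the
reflection in the line spanned by `𝐭 φ`, so `1 - 𝐌 φ` kills `𝐭 φ`: the stability term drops out
and `B 𝐭 = γ(θ) 𝐭 + γ'(θ) 𝐧`. Differentiating with `𝐭' = θ' 𝐧` and `𝐧' = -θ' 𝐭`, the `γ'` terms
cancel, so `(B 𝐭)' = (γ + γ'')(θ) θ' 𝐧`, while `κ = -X'' ⬝ᵥ 𝐧 = -θ'`.
-/

open Matrix Real

local notation "𝐭" φ:max => ![cos φ, sin φ]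
local notation "𝐧" φ:max => ![-sin φ, cos φ]
local notation "𝐌" φ:max =>
  !![cos (2 * φ), sin (2 * φ); sin (2 * φ), -cos (2 * φ)]

theorem reflection_mulVec_tangent (φ : ℝ) : (𝐌 φ) *ᵥ 𝐭 φ = 𝐭 φ := by
  simp only [mulVec_fin_two, of_apply, cons_val_zero, cons_val_one]
  rw [cos_two_mul, sin_two_mul]
  exact vec2_eq (by linear_combination 2 * cos φ * sin_sq_add_cos_sq φ) (by ring)

theorem normal_dotProduct_self (φ : ℝ) : (𝐧 φ) ⬝ᵥ 𝐧 φ = 1 := by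
  rw [vec2_dotProduct']
  linear_combination sin_sq_add_cos_sq φ

theorem rotation_mulVec_tangent (a b φ : ℝ) :
    !![a, -b; b, a] *ᵥ 𝐭 φ = a • 𝐭 φ + b • 𝐧 φ := by
  simp only [mulVec_fin_two, of_apply, cons_val_zero, cons_val_one]
  rw [smul_vec2, smul_vec2, vec2_add]
  exact vec2_eq (by ring) (by ring)

theorem stiffness_mulVec_tangent (a b c φ : ℝ) :
    (!![a, -b; b, a] * 𝐌 φ + c • ((1 : Matrix (Fin 2) (Fin 2) ℝ) - 𝐌 φ)) *ᵥ 𝐭 φ =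
      a • 𝐭 φ + b • 𝐧 φ := by
  rw [add_mulVec, ← mulVec_mulVec, smul_mulVec, sub_mulVec, one_mulVec,
    reflection_mulVec_tangent, sub_self, smul_zero, add_zero, rotation_mulVec_tangent]

section Frame

variable {θ : ℝ → ℝ} {θ' s : ℝ}

theorem HasDerivAt.unitTangent (hθ : HasDerivAt θ θ' s) :
    HasDerivAt (fun s => 𝐭 (θ s)) (θ' • 𝐧 (θ s)) s := by
  refine hasDerivAt_pi.mpr fun i => ?_
  fin_cases i
  · simpa [mul_comm] using hθ.cos
  · simpa [mul_comm] using hθ.sin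

theorem HasDerivAt.unitNormal (hθ : HasDerivAt θ θ' s) :
    HasDerivAt (fun s => 𝐧 (θ s)) (-θ' • 𝐭 (θ s)) s := by
  refine hasDerivAt_pi.mpr fun i => ?_
  fin_cases i
  · simpa [mul_comm] using hθ.sin.fun_neg
  · simpa [mul_comm] using hθ.cos

theorem HasDerivAt.smul_unitTangent_add_smul_unitNormal {f g : ℝ → ℝ} {f' g' : ℝ}
    (hθ : HasDerivAt θ θ' s) (hf : HasDerivAt f f' s) (hg : HasDerivAt g g' s) :
    HasDerivAt (fun s => f s • 𝐭 (θ s) + g s • 𝐧 (θ s))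
      ((f' - g s * θ') • 𝐭 (θ s) + (g' + f s * θ') • 𝐧 (θ s)) s := by
  refine ((hf.smul hθ.unitTangent).add (hg.smul hθ.unitNormal)).congr_deriv ?_
  module

end Frame

theorem weighted_curvature_identity_general
    (γ S θ : ℝ → ℝ) (X : ℝ → Fin 2 → ℝ)
    (hγ : ContDiff ℝ 2 γ) (hθ : Differentiable ℝ θ)
    (htangent : ∀ s, deriv X s = ![cos (θ s), sin (θ s)]) :
    ∀ s : ℝ,
      ((γ (θ s) + deriv (deriv γ) (θ s)) *
          (-(deriv (deriv X) s ⬝ᵥ ![-sin (θ s), cos (θ s)]))) •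
        ![-sin (θ s), cos (θ s)] =
      -deriv (fun s =>
        (!![γ (θ s), -deriv γ (θ s); deriv γ (θ s), γ (θ s)] *
            !![cos (2 * θ s), sin (2 * θ s); sin (2 * θ s), -cos (2 * θ s)] +
          (S (θ s) / 2) • ((1 : Matrix (Fin 2) (Fin 2) ℝ) -
            !![cos (2 * θ s), sin (2 * θ s); sin (2 * θ s), -cos (2 * θ s)])).mulVec
          (deriv X s)) s := by
  intro s
  have hγ' : ContDiff ℝ 1 (deriv γ) := hγ.deriv'
  have hθs : HasDerivAt θ (deriv θ s) s := (hθ s).hasDerivAt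
  have hγθ : HasDerivAt (fun s => γ (θ s)) (deriv γ (θ s) * deriv θ s) s :=
    ((hγ.differentiable two_ne_zero) (θ s)).hasDerivAt.comp s hθs
  have hγ'θ : HasDerivAt (fun s => deriv γ (θ s)) (deriv (deriv γ) (θ s) * deriv θ s) s :=
    ((hγ'.differentiable one_ne_zero) (θ s)).hasDerivAt.comp s hθs
  have hcurvature : deriv (deriv X) s = deriv θ s • 𝐧 (θ s) := by
    rw [funext htangent]
    exact hθs.unitTangent.deriv
  have hstiffness : (fun s => (!![γ (θ s), -deriv γ (θ s); deriv γ (θ s), γ (θ s)] * 𝐌 (θ s) +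
      (S (θ s) / 2) • ((1 : Matrix (Fin 2) (Fin 2) ℝ) - 𝐌 (θ s))) *ᵥ deriv X s) =
      fun s => γ (θ s) • 𝐭 (θ s) + deriv γ (θ s) • 𝐧 (θ s) := by
    funext s
    rw [htangent, stiffness_mulVec_tangent]
  rw [hcurvature, hstiffness, (hθs.smul_unitTangent_add_smul_unitNormal hγθ hγ'θ).deriv,
    smul_dotProduct, normal_dotProduct_self]
  module

/-- The differential identity `(γ(θ)+γ″(θ))·κ·n = −∂_s[B(θ)∂_sX]` for a unit-speed
planar curve `X` with inclination angle `θ`, unit normal `n = (−sin θ, cos θ)`,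
curvature `κ = −X″·n`, anisotropy density `γ` and stability function `S`. -/
theorem weighted_curvature_identity
    (γ S θ : ℝ → ℝ) (X : ℝ → Fin 2 → ℝ)
    (hγ : ContDiff ℝ 2 γ) (hS : Differentiable ℝ S) (hθ : Differentiable ℝ θ)
    (hX : Differentiable ℝ X) (hX' : Differentiable ℝ (deriv X))
    (htangent : ∀ s, deriv X s = ![cos (θ s), sin (θ s)]) :
    ∀ s : ℝ,
      ((γ (θ s) + deriv (deriv γ) (θ s)) *
          (-(deriv (deriv X) s ⬝ᵥ ![-sin (θ s), cos (θ s)]))) •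
        ![-sin (θ s), cos (θ s)] =
      -deriv (fun s =>
        (!![γ (θ s), -deriv γ (θ s); deriv γ (θ s), γ (θ s)] *
            !![cos (2 * θ s), sin (2 * θ s); sin (2 * θ s), -cos (2 * θ s)] +
          (S (θ s) / 2) • ((1 : Matrix (Fin 2) (Fin 2) ℝ) -
            !![cos (2 * θ s), sin (2 * θ s); sin (2 * θ s), -cos (2 * θ s)])).mulVec
          (deriv X s)) s :=
  weighted_curvature_identity_general γ S θ X hγ hθ htangent
end
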